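/- Let M be a noncrossing perfect matching on {1,...,2n} and let s_i = (i, i+1) act on ℂ[x] by swapping columns i and i+1. If {i, i+1} is a block of M then s_i.Δ_M = -Δ_M; otherwise, if a ∼ i and b ∼ i+1 in M, then s_i.Δ_M = Δ_M + Δ_{M'}, where M' is obtained from M by replacing the blocks {a,i} and {b,i+1} by {a,b} and {i,i+1}, and M' is again noncrossing. -/

import Mathlib

open MvPolynomial Finset

noncomputable section

/-- The polynomial ring ℂ[x_{ij}] for a 2 × (2n) matrix of indeterminates. -/
abbrev PolyR (n : ℕ) := MvPolynomial (Fin 2 × Fin (2 * n)) ℂ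

/-- The 2×2 minor Δ_{ab} = x_{1a} x_{2b} - x_{1b} x_{2a} (rows 0,1 in 0-indexing). -/
def Delta {n : ℕ} (a b : Fin (2 * n)) : PolyR n :=
  X (0, a) * X (1, b) - X (0, b) * X (1, a)

/-- A perfect matching on {1,…,2n}, encoded as a fixed-point-free involution. -/
structure PM (n : ℕ) where
  f : Fin (2 * n) → Fin (2 * n)
  invol : ∀ i, f (f i) = i
  nofix : ∀ i, f i ≠ i

/-- The product Δ_M of the minors over the blocks of a perfect matching M. -/
def DeltaM {n : ℕ} (M : PM n) : PolyR n :=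
  ∏ i ∈ Finset.univ.filter (fun i => i < M.f i), Delta i (M.f i)

/-- M is noncrossing: no a < b < c < d with a ∼ c and b ∼ d. -/
def Noncrossing {n : ℕ} (M : PM n) : Prop :=
  ¬ ∃ a b c d : Fin (2 * n), a < b ∧ b < c ∧ c < d ∧ M.f a = c ∧ M.f b = d

/-- The number of crossing pairs a < b < c < d with a ∼ c, b ∼ d in M. -/
def crossings {n : ℕ} (M : PM n) : ℕ :=
  ((Finset.univ : Finset (Fin (2 * n) × Fin (2 * n))).filter
    (fun p => p.1 < p.2 ∧ p.2 < M.f p.1 ∧ M.f p.1 < M.f p.2)).card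

/-!
Swapping columns `i` and `j = i + 1` fixes every minor `Δ_{kl}` with `k, l ∉ {i, j}` and sends
`Δ_{ij}` to `-Δ_{ij}`, which settles the case of a block `{i, j}`. Otherwise only the blocks
`{i, a}` and `{j, b}` are affected, and the claim is the three-term Plücker relation
`Δ_{pr} Δ_{qs} = Δ_{pq} Δ_{rs} + Δ_{ps} Δ_{qr}` for `p < q < r < s`: since `M` is noncrossing,
`a, i, j, b` come in one of the orders `b < a < i < j`, `a < i < j < b`, `i < j < b < a`, and in
each of them `{a, j}, {b, i}` is the crossing pair. Finally `M'` is noncrossing because no point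
lies strictly between `i` and `j`, so a block crossing `{a, b}` would cross `{i, a}` or `{j, b}`.
-/

open Equiv

theorem Delta_anticomm {n : ℕ} (a b : Fin (2 * n)) : Delta b a = -Delta a b := by
  simp only [Delta]; ring

theorem Delta_plucker {n : ℕ} (p q r s : Fin (2 * n)) :
    Delta p r * Delta q s = Delta p q * Delta r s + Delta p s * Delta q r := by
  simp only [Delta]; ring

def sortedDelta {n : ℕ} (a b : Fin (2 * n)) : PolyR n := Delta (min a b) (max a b)

section sortedDelta

variable {n : ℕ} {a b i j p q r s : Fin (2 * n)}

theorem sortedDelta_comm (a b : Fin (2 * n)) : sortedDelta a b = sortedDelta b a := by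
  rw [sortedDelta, sortedDelta, min_comm, max_comm]

theorem sortedDelta_of_lt (h : a < b) : sortedDelta a b = Delta a b := by
  rw [sortedDelta, min_eq_left h.le, max_eq_right h.le]

theorem sortedDelta_plucker (hpq : p < q) (hqr : q < r) (hrs : r < s) :
    sortedDelta p r * sortedDelta q s =
      sortedDelta p q * sortedDelta r s + sortedDelta p s * sortedDelta q r := by
  rw [sortedDelta_of_lt (hpq.trans hqr), sortedDelta_of_lt (hqr.trans hrs), sortedDelta_of_lt hpq,
    sortedDelta_of_lt hrs, sortedDelta_of_lt (hpq.trans (hqr.trans hrs)), sortedDelta_of_lt hqr]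
  exact Delta_plucker p q r s

theorem sortedDelta_exchange (hij : i < j)
    (h : b < a ∧ a < i ∨ a < i ∧ j < b ∨ j < b ∧ b < a) :
    sortedDelta a j * sortedDelta b i =
      sortedDelta i a * sortedDelta j b + sortedDelta i j * sortedDelta a b := by
  rcases h with ⟨hba, hai⟩ | ⟨hai, hjb⟩ | ⟨hjb, hba⟩
  · have h := sortedDelta_plucker hba hai hij
    simp only [sortedDelta_comm] at h ⊢
    linear_combination h
  · have h := sortedDelta_plucker hai hij hjb
    simp only [sortedDelta_comm] at h ⊢
    linear_combination h
  · have h := sortedDelta_plucker hij hjb hba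
    simp only [sortedDelta_comm] at h ⊢
    linear_combination h

end sortedDelta

def renameColumns {n : ℕ} (e : Fin (2 * n) → Fin (2 * n)) : PolyR n →ₐ[ℂ] PolyR n :=
  rename fun p => (p.1, e p.2)

section renameColumns

variable {n : ℕ} {i j : Fin (2 * n)}

theorem renameColumns_Delta (e : Fin (2 * n) → Fin (2 * n)) (a b : Fin (2 * n)) :
    renameColumns e (Delta a b) = Delta (e a) (e b) := by
  simp [renameColumns, Delta]

theorem renameColumns_swap_sortedDelta_self (i j : Fin (2 * n)) :
    renameColumns (swap i j) (sortedDelta i j) = -sortedDelta i j := by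
  rcases lt_trichotomy i j with h | rfl | h
  · rw [sortedDelta_of_lt h, renameColumns_Delta, swap_apply_left, swap_apply_right, Delta_anticomm]
  · simp [sortedDelta, Delta]
  · rw [sortedDelta_comm, sortedDelta_of_lt h, renameColumns_Delta, swap_apply_left,
      swap_apply_right, Delta_anticomm]

theorem renameColumns_swap_sortedDelta (hij : (j : ℕ) = i + 1) {p : Fin (2 * n)} (hpi : p ≠ i)
    (hpj : p ≠ j) (q : Fin (2 * n)) :
    renameColumns (swap i j) (sortedDelta p q) = sortedDelta p (swap i j q) := by
  have hp : swap i j p = p := swap_apply_of_ne_of_ne hpi hpj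
  have hq : p < swap i j q ↔ p < q := by
    rcases eq_or_ne q i with rfl | hqi
    · rw [swap_apply_left]; omega
    rcases eq_or_ne q j with rfl | hqj
    · rw [swap_apply_right]; omega
    rw [swap_apply_of_ne_of_ne hqi hqj]
  by_cases hpq : p < q
  · rw [sortedDelta_of_lt hpq, sortedDelta_of_lt (hq.2 hpq), renameColumns_Delta, hp]
  · rw [sortedDelta, sortedDelta, min_eq_right (not_lt.1 hpq), max_eq_left (not_lt.1 hpq),
      min_eq_right (not_lt.1 (mt hq.1 hpq)), max_eq_left (not_lt.1 (mt hq.1 hpq)),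
      renameColumns_Delta, hp]

end renameColumns

namespace PM

variable {n : ℕ} (M : PM n)

theorem f_injective : Function.Injective M.f :=
  Function.LeftInverse.injective M.invol

theorem f_eq_comm {x y : Fin (2 * n)} : M.f x = y ↔ M.f y = x :=
  ⟨fun h => h ▸ M.invol x, fun h => h ▸ M.invol y⟩

def DeltaOn (S : Finset (Fin (2 * n))) : PolyR n := ∏ k ∈ S with k < M.f k, Delta k (M.f k)

theorem DeltaOn_union {S T : Finset (Fin (2 * n))} (h : Disjoint S T) :
    M.DeltaOn (S ∪ T) = M.DeltaOn S * M.DeltaOn T := by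
  rw [DeltaOn, filter_union, prod_union (disjoint_filter_filter h), DeltaOn, DeltaOn]

theorem DeltaM_eq_DeltaOn_mul_compl (S : Finset (Fin (2 * n))) :
    DeltaM M = M.DeltaOn S * M.DeltaOn Sᶜ := by
  rw [← DeltaOn_union _ disjoint_compl_right, union_compl]
  rfl

theorem DeltaOn_pair {p q : Fin (2 * n)} (h : M.f p = q) :
    M.DeltaOn {p, q} = sortedDelta p q := by
  have hq : M.f q = p := M.f_eq_comm.1 h
  rcases lt_or_gt_of_ne (M.nofix p) with hlt | hlt <;> rw [h] at hlt
  · rw [DeltaOn, filter_insert, if_neg (h ▸ hlt.asymm), filter_singleton, if_pos (hq ▸ hlt),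
      prod_singleton, hq, sortedDelta_comm, sortedDelta_of_lt hlt]
  · rw [DeltaOn, filter_insert, if_pos (h ▸ hlt), filter_singleton, if_neg (hq ▸ hlt.asymm),
      insert_empty, prod_singleton, h, sortedDelta_of_lt hlt]

theorem DeltaM_eq_sortedDelta_mul_sortedDelta_mul {p q r s : Fin (2 * n)} (hpq : M.f p = q)
    (hrs : M.f r = s) (h : Disjoint ({p, q} : Finset (Fin (2 * n))) {r, s}) :
    DeltaM M = sortedDelta p q * sortedDelta r s * M.DeltaOn ({p, q} ∪ {r, s})ᶜ := by
  rw [M.DeltaM_eq_DeltaOn_mul_compl ({p, q} ∪ {r, s}), M.DeltaOn_union h, M.DeltaOn_pair hpq,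
    M.DeltaOn_pair hrs]

theorem DeltaOn_congr {M' : PM n} {S : Finset (Fin (2 * n))} (h : ∀ k ∈ S, M'.f k = M.f k) :
    M'.DeltaOn S = M.DeltaOn S := by
  rw [DeltaOn, DeltaOn, filter_congr fun k hk => by rw [h k hk]]
  exact prod_congr rfl fun k hk => by rw [h k (mem_filter.1 hk).1]

theorem renameColumns_DeltaOn {e : Fin (2 * n) → Fin (2 * n)} {S : Finset (Fin (2 * n))}
    (he : ∀ k ∈ S, e k = k) (hS : ∀ k ∈ S, M.f k ∈ S) :
    renameColumns e (M.DeltaOn S) = M.DeltaOn S := by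
  rw [DeltaOn, map_prod]
  refine prod_congr rfl fun k hk => ?_
  have hk := (mem_filter.1 hk).1
  rw [renameColumns_Delta, he k hk, he _ (hS k hk)]

theorem f_mem_compl {S : Finset (Fin (2 * n))} (hS : ∀ k ∈ S, M.f k ∈ S) :
    ∀ k ∈ Sᶜ, M.f k ∈ Sᶜ := fun k hk =>
  mem_compl.2 fun h => mem_compl.1 hk (M.invol k ▸ hS _ h)

def conj (σ : Perm (Fin (2 * n))) : PM n where
  f := σ ∘ M.f ∘ σ.symm
  invol k := by simp [M.invol]
  nofix k h := M.nofix (σ.symm k) (by simpa [eq_symm_apply] using h)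

/-- With `a = M.f i` and `b = M.f j`, conjugating by the transposition `(a j)` replaces the blocks
`{i, a}, {j, b}` of `M` by `{i, j}, {a, b}`. -/
def reconnect (i j : Fin (2 * n)) : PM n := M.conj (swap (M.f i) j)

variable {i j : Fin (2 * n)}

theorem reconnect_apply (k : Fin (2 * n)) :
    (M.reconnect i j).f k = swap (M.f i) j (M.f (swap (M.f i) j k)) := rfl

theorem reconnect_apply_left (hij : i ≠ j) : (M.reconnect i j).f i = j := by
  rw [reconnect_apply, swap_apply_of_ne_of_ne (M.nofix i).symm hij, swap_apply_left]

theorem reconnect_apply_partner (hij : i ≠ j) : (M.reconnect i j).f (M.f i) = M.f j := by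
  rw [reconnect_apply, swap_apply_left,
    swap_apply_of_ne_of_ne (M.f_injective.ne hij.symm) (M.nofix j)]

theorem reconnect_apply_of_ne {k : Fin (2 * n)} (hki : k ≠ i) (hkj : k ≠ j) (hka : k ≠ M.f i)
    (hkb : k ≠ M.f j) : (M.reconnect i j).f k = M.f k := by
  rw [reconnect_apply, swap_apply_of_ne_of_ne hka hkj,
    swap_apply_of_ne_of_ne (M.f_injective.ne hki) fun h => hkb (M.f_eq_comm.1 h).symm]

theorem reconnect_block_cases (hij : i ≠ j) (k : Fin (2 * n)) :
    (k = i ∧ (M.reconnect i j).f k = j ∨ k = j ∧ (M.reconnect i j).f k = i) ∨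
    (k = M.f i ∧ (M.reconnect i j).f k = M.f j ∨ k = M.f j ∧ (M.reconnect i j).f k = M.f i) ∨
    (M.reconnect i j).f k = M.f k ∧ k ∉ ({i, j, M.f i, M.f j} : Finset (Fin (2 * n))) ∧
      M.f k ∉ ({i, j, M.f i, M.f j} : Finset (Fin (2 * n))) := by
  have hi := M.reconnect_apply_left hij
  have ha := M.reconnect_apply_partner hij
  by_cases hk : k = i ∨ k = j
  · rcases hk with rfl | rfl
    exacts [.inl (.inl ⟨rfl, hi⟩), .inl (.inr ⟨rfl, (PM.f_eq_comm _).1 hi⟩)]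
  by_cases hk' : k = M.f i ∨ k = M.f j
  · rcases hk' with rfl | rfl
    exacts [.inr (.inl (.inl ⟨rfl, ha⟩)), .inr (.inl (.inr ⟨rfl, (PM.f_eq_comm _).1 ha⟩))]
  simp only [not_or] at hk hk'
  refine .inr (.inr ⟨M.reconnect_apply_of_ne hk.1 hk.2 hk'.1 hk'.2, ?_, ?_⟩)
  · simp [hk, hk']
  · simp only [mem_insert, mem_singleton, not_or, M.f_eq_comm (y := i), M.f_eq_comm (y := j),
      M.f_injective.eq_iff]
    exact ⟨Ne.symm hk'.1, Ne.symm hk'.2, hk.1, hk.2⟩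

theorem mem_iff_reconnect_apply_mem (hij : i ≠ j) {U : Set (Fin (2 * n))} (hi : i ∈ U ↔ j ∈ U)
    (ha : M.f i ∈ U ↔ M.f j ∈ U)
    (h : ∀ x, x ∉ ({i, j, M.f i, M.f j} : Finset (Fin (2 * n))) →
      M.f x ∉ ({i, j, M.f i, M.f j} : Finset (Fin (2 * n))) → (x ∈ U ↔ M.f x ∈ U))
    (x : Fin (2 * n)) : x ∈ U ↔ (M.reconnect i j).f x ∈ U := by
  rcases M.reconnect_block_cases hij x with
    (⟨rfl, hx⟩ | ⟨rfl, hx⟩) | (⟨rfl, hx⟩ | ⟨rfl, hx⟩) | ⟨hx, hxS, hfxS⟩ <;> rw [hx]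
  exacts [hi, hi.symm, ha, ha.symm, h x hxS hfxS]

end PM

theorem noncrossing_iff_forall_mem_uIoo {n : ℕ} {M : PM n} :
    Noncrossing M ↔ ∀ w x, x ∈ Set.uIoo w (M.f w) ↔ M.f x ∈ Set.uIoo w (M.f w) := by
  constructor
  · intro hM w x
    rcases eq_or_ne x w with rfl | hxw
    · simp
    rcases eq_or_ne x (M.f w) with rfl | hxw'
    · simp [M.invol]
    wlog hw : w < M.f w generalizing w
    · rw [Set.uIoo_comm]
      have hw' : M.f w < M.f (M.f w) := by
        rw [M.invol]; exact lt_of_le_of_ne (not_lt.1 hw) (M.nofix w)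
      simpa only [M.invol] using this (M.f w) hxw' (by rwa [M.invol]) hw'
    wlog hx : x < M.f x generalizing x
    · have hx' : M.f x < M.f (M.f x) := by
        rw [M.invol]; exact lt_of_le_of_ne (not_lt.1 hx) (M.nofix x)
      simpa only [M.invol, Iff.comm] using this (M.f x) (fun h => hxw' (M.f_eq_comm.1 h).symm)
        (M.f_injective.ne hxw) hx'
    have h₁ : ¬(w < x ∧ x < M.f w ∧ M.f w < M.f x) := fun h =>
      hM ⟨w, x, _, _, h.1, h.2.1, h.2.2, rfl, rfl⟩
    have h₂ : ¬(x < w ∧ w < M.f x ∧ M.f x < M.f w) := fun h =>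
      hM ⟨x, w, _, _, h.1, h.2.1, h.2.2, rfl, rfl⟩
    have := M.f_injective.ne hxw
    rw [Set.uIoo_of_lt hw, Set.mem_Ioo, Set.mem_Ioo]
    omega
  · rintro h ⟨a, b, c, d, hab, hbc, hcd, rfl, rfl⟩
    have := h a b
    rw [Set.uIoo_of_lt (hab.trans hbc), Set.mem_Ioo, Set.mem_Ioo] at this
    exact hcd.not_gt (this.1 ⟨hab, hbc⟩).2

section

variable {m : ℕ} {i j u v x y a b : Fin m}

theorem uIoo_eq_empty_of_adjacent (hij : (j : ℕ) = i + 1) : Set.uIoo i j = ∅ := by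
  ext x
  simp only [Set.uIoo_eq_union, Set.mem_union, Set.mem_Ioo, Set.mem_empty_iff_false, iff_false]
  omega

theorem mem_uIoo_iff_of_adjacent (hij : (j : ℕ) = i + 1) (hui : u ≠ i) (huj : u ≠ j) (hvi : v ≠ i)
    (hvj : v ≠ j) : i ∈ Set.uIoo u v ↔ j ∈ Set.uIoo u v := by
  simp only [Set.uIoo_eq_union, Set.mem_union, Set.mem_Ioo]
  omega

theorem mem_uIoo_iff_of_adjacent_of_iff (hij : (j : ℕ) = i + 1)
    (hx : x ∉ ({i, j, a, b} : Finset (Fin m))) (hy : y ∉ ({i, j, a, b} : Finset (Fin m)))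
    (ha : x ∈ Set.uIoo i a ↔ y ∈ Set.uIoo i a) (hb : x ∈ Set.uIoo j b ↔ y ∈ Set.uIoo j b) :
    x ∈ Set.uIoo a b ↔ y ∈ Set.uIoo a b := by
  simp only [mem_insert, mem_singleton, not_or] at hx hy
  simp only [Set.uIoo_eq_union, Set.mem_union, Set.mem_Ioo] at ha hb ⊢
  omega

end

section

variable {n : ℕ} {M : PM n} {i j : Fin (2 * n)}

theorem Noncrossing.partner_order (hM : Noncrossing M) (hij : (j : ℕ) = i + 1) (hfi : M.f i ≠ j) :
    M.f j < M.f i ∧ M.f i < i ∨ M.f i < i ∧ j < M.f j ∨ j < M.f j ∧ M.f j < M.f i := by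
  have h := noncrossing_iff_forall_mem_uIoo.1 hM i j
  have := M.f_injective.ne (show j ≠ i by omega)
  have : M.f j ≠ i := fun h => hfi (M.f_eq_comm.1 h)
  have := M.nofix i
  have := M.nofix j
  simp only [Set.uIoo_eq_union, Set.mem_union, Set.mem_Ioo] at h
  omega

theorem Noncrossing.reconnect (hM : Noncrossing M) (hij : (j : ℕ) = i + 1) (hfi : M.f i ≠ j) :
    Noncrossing (M.reconnect i j) := by
  have hne : i ≠ j := fun h => by omega
  have hbi : M.f j ≠ i := fun h => hfi (M.f_eq_comm.1 h)
  have hN := noncrossing_iff_forall_mem_uIoo.1 hM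
  refine noncrossing_iff_forall_mem_uIoo.2 fun w => ?_
  rcases M.reconnect_block_cases hne w with hw | hw | ⟨hfw, hw, hfw'⟩
  · have : Set.uIoo w ((M.reconnect i j).f w) = ∅ := by
      rcases hw with ⟨rfl, h⟩ | ⟨rfl, h⟩ <;> rw [h]
      exacts [uIoo_eq_empty_of_adjacent hij, Set.uIoo_comm w i ▸ uIoo_eq_empty_of_adjacent hij]
    simp [this]
  · have hU : Set.uIoo w ((M.reconnect i j).f w) = Set.uIoo (M.f i) (M.f j) := by
      rcases hw with ⟨rfl, h⟩ | ⟨rfl, h⟩ <;> rw [h]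
      exact Set.uIoo_comm _ _
    rw [hU]
    refine M.mem_iff_reconnect_apply_mem hne
      (mem_uIoo_iff_of_adjacent hij (M.nofix i) hfi hbi (M.nofix j)) (by simp)
      fun x hx hfx => mem_uIoo_iff_of_adjacent_of_iff hij hx hfx (hN i x) (hN j x)
  · simp only [mem_insert, mem_singleton, not_or] at hw hfw'
    have hadj := mem_uIoo_iff_of_adjacent hij hw.1 hw.2.1 hfw'.1 hfw'.2.1
    have hia := hN w (M.f i)
    have hjb := hN w (M.f j)
    rw [M.invol] at hia hjb
    rw [hfw]
    exact M.mem_iff_reconnect_apply_mem hne hadj (hia.trans (hadj.trans hjb.symm))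
      fun x _ _ => hN w x

theorem renameColumns_swap_DeltaM_of_f_eq (h : M.f i = j) :
    renameColumns (swap i j) (DeltaM M) = -DeltaM M := by
  have hS : ∀ k ∈ ({i, j} : Finset (Fin (2 * n))), M.f k ∈ ({i, j} : Finset (Fin (2 * n))) := by
    simp [← h, M.invol]
  have he : ∀ k ∈ ({i, j} : Finset (Fin (2 * n)))ᶜ, swap i j k = k := fun k hk => by
    simp only [mem_compl, mem_insert, mem_singleton, not_or] at hk
    exact swap_apply_of_ne_of_ne hk.1 hk.2
  rw [M.DeltaM_eq_DeltaOn_mul_compl {i, j}, map_mul, M.DeltaOn_pair h,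
    renameColumns_swap_sortedDelta_self, M.renameColumns_DeltaOn he (M.f_mem_compl hS), neg_mul]

theorem renameColumns_swap_DeltaM (hM : Noncrossing M) (hij : (j : ℕ) = i + 1) (hfi : M.f i ≠ j) :
    renameColumns (swap i j) (DeltaM M) = DeltaM M + DeltaM (M.reconnect i j) := by
  have hne : i ≠ j := fun h => by omega
  have hbi : M.f j ≠ i := fun h => hfi (M.f_eq_comm.1 h)
  have hab : M.f i ≠ M.f j := M.f_injective.ne hne
  set S : Finset (Fin (2 * n)) := {i, M.f i} ∪ {j, M.f j}
  have hS : ∀ k ∈ S, M.f k ∈ S := by simp [S, M.invol, or_comm]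
  have hSc : ∀ k ∈ Sᶜ, k ≠ i ∧ k ≠ j ∧ k ≠ M.f i ∧ k ≠ M.f j := fun k hk => by
    simp only [S, mem_compl, mem_union, mem_insert, mem_singleton, not_or] at hk
    exact ⟨hk.1.1, hk.2.1, hk.1.2, hk.2.2⟩
  have hDM : DeltaM M = sortedDelta i (M.f i) * sortedDelta j (M.f j) * M.DeltaOn Sᶜ :=
    M.DeltaM_eq_sortedDelta_mul_sortedDelta_mul rfl rfl
      (by simp [hne.symm, hfi.symm, hbi, hab.symm])
  have hDM' : DeltaM (M.reconnect i j) =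
      sortedDelta i j * sortedDelta (M.f i) (M.f j) * M.DeltaOn Sᶜ := by
    have hS' : S = {i, j} ∪ {M.f i, M.f j} := by ext; simp [S]; tauto
    rw [PM.DeltaM_eq_sortedDelta_mul_sortedDelta_mul _ (M.reconnect_apply_left hne)
      (M.reconnect_apply_partner hne) (by simp [M.nofix i, hfi, hbi, M.nofix j]), ← hS',
      PM.DeltaOn_congr _ fun k hk => M.reconnect_apply_of_ne (hSc k hk).1 (hSc k hk).2.1
        (hSc k hk).2.2.1 (hSc k hk).2.2.2]
  have hσ : renameColumns (swap i j) (DeltaM M) =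
      sortedDelta (M.f i) j * sortedDelta (M.f j) i * M.DeltaOn Sᶜ := by
    rw [hDM, map_mul, map_mul,
      M.renameColumns_DeltaOn (fun k hk => swap_apply_of_ne_of_ne (hSc k hk).1 (hSc k hk).2.1)
        (M.f_mem_compl hS),
      sortedDelta_comm i, sortedDelta_comm j, renameColumns_swap_sortedDelta hij (M.nofix i) hfi,
      renameColumns_swap_sortedDelta hij hbi (M.nofix j), swap_apply_left, swap_apply_right]
  rw [hσ, hDM, hDM', sortedDelta_exchange (by omega) (hM.partner_order hij hfi)]
  ring

end

theorem adjacent_transposition_action (n : ℕ) (M : PM n) (hM : Noncrossing M)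
    (i j : Fin (2 * n)) (hij : (j : ℕ) = (i : ℕ) + 1) :
    (M.f i = j →
      MvPolynomial.rename (fun p : Fin 2 × Fin (2 * n) => (p.1, Equiv.swap i j p.2)) (DeltaM M) =
        - DeltaM M) ∧
    (M.f i ≠ j →
      ∃ M' : PM n, Noncrossing M' ∧ M'.f i = j ∧ M'.f (M.f i) = M.f j ∧
        (∀ k, k ≠ i → k ≠ j → k ≠ M.f i → k ≠ M.f j → M'.f k = M.f k) ∧
        MvPolynomial.rename (fun p : Fin 2 × Fin (2 * n) => (p.1, Equiv.swap i j p.2)) (DeltaM M) =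
          DeltaM M + DeltaM M') := by
  have hne : i ≠ j := fun h => by omega
  refine ⟨renameColumns_swap_DeltaM_of_f_eq, fun hfi => ⟨M.reconnect i j, hM.reconnect hij hfi,
    M.reconnect_apply_left hne, M.reconnect_apply_partner hne, fun k => M.reconnect_apply_of_ne,
    renameColumns_swap_DeltaM hM hij hfi⟩⟩
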